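/- arXiv:math/9811181 — 3 statements merged into one kernel-verified Lean document; each statement's English description precedes it below -/
import Mathlib

section
/- Let N be a torsion-free group containing no subgroup isomorphic to ℤ × ℤ, let F be a normal subgroup of N with N/F infinite cyclic, and let t ∈ N be an element whose image generates N/F. Then for any element g ∈ F with g ≠ 1, the elements g_n = tⁿ g t⁻ⁿ (n ∈ ℤ) are pairwise non-conjugate in F. -/
/-- The December 2024 Mathlib definition: a monoid is torsion-free if no element other than `1` has finite order. -/
def Monoid.IsTorsionFree (G : Type*) [Monoid G] : Prop :=
  ∀ g : G, g ≠ 1 → ¬IsOfFinOrder g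

/-- If `N` is torsion-free with no `ℤ × ℤ` subgroup, `F ⊴ N` with `N/F` infinite cyclic
generated by the image of `t`, and `g ∈ F` is nontrivial, then the elements
`gₙ = tⁿ g t⁻ⁿ` are pairwise non-conjugate in `F`. -/
theorem stmt0 {N : Type*} [Group N]
    (hTF : Monoid.IsTorsionFree N)
    (hNoZ2 : ∀ K : Subgroup N, ¬ Nonempty (K ≃* Multiplicative (ℤ × ℤ)))
    (F : Subgroup N) [F.Normal] (t : N)
    (hgen : ∀ x : N ⧸ F, ∃ n : ℤ, x = ((t : N ⧸ F)) ^ n)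
    (hinf : ∀ n : ℤ, n ≠ 0 → ((t : N ⧸ F)) ^ n ≠ 1)
    (g : N) (hgF : g ∈ F) (hg : g ≠ 1) :
    ∀ m n : ℤ, m ≠ n →
      ¬ ∃ h ∈ F, h * (t ^ m * g * t ^ (-m)) * h⁻¹ = t ^ n * g * t ^ (-n) := by
  rintro m n hmn ⟨h, hhF, heq⟩
  set a : N := t ^ m * g * t ^ (-m) with ha
  set u : N := t ^ (m - n) * h with hu
  -- a ∈ F
  have haF : a ∈ F := by
    have : t ^ m * g * (t ^ m)⁻¹ ∈ F := Subgroup.Normal.conj_mem ‹F.Normal› g hgF (t ^ m)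
    simpa [ha, zpow_neg] using this
  -- a ≠ 1
  have haNe : a ≠ 1 := by
    intro hc
    apply hg
    have : g = (t ^ m)⁻¹ * a * t ^ m := by rw [ha]; group
    rw [hc] at this; simpa using this
  -- u commutes with a
  have h1 : h * a = (t ^ n * g * t ^ (-n)) * h := by
    rw [← heq]; group
  have comm : Commute u a := by
    show u * a = a * u
    rw [hu, mul_assoc, h1, ha]
    group
  have key : ∀ i j i' j' : ℤ,
      u ^ (i + i') * a ^ (j + j') = (u ^ i * a ^ j) * (u ^ i' * a ^ j') := by
    intro i j i' j'
    have hc : a ^ j * u ^ i' = u ^ i' * a ^ j :=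
      ((comm.zpow_zpow i' j).symm).eq
    rw [zpow_add, zpow_add]
    calc u ^ i * u ^ i' * (a ^ j * a ^ j')
        = u ^ i * (u ^ i' * a ^ j) * a ^ j' := by group
      _ = u ^ i * (a ^ j * u ^ i') * a ^ j' := by rw [hc]
      _ = (u ^ i * a ^ j) * (u ^ i' * a ^ j') := by group
  -- build hom ℤ × ℤ → N
  let f : Multiplicative (ℤ × ℤ) →* N :=
    MonoidHom.mk' (fun p => u ^ (Multiplicative.toAdd p).1 * a ^ (Multiplicative.toAdd p).2)
      (fun p q => key _ _ _ _)
  -- f is injective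
  have hinj : Function.Injective f := by
    rw [injective_iff_map_eq_one]
    rintro ⟨i, j⟩ hp
    have hp' : u ^ i * a ^ j = 1 := hp
    -- project to quotient
    have haq : ((a : N) : N ⧸ F) = 1 := (QuotientGroup.eq_one_iff a).mpr haF
    have hhq : ((h : N) : N ⧸ F) = 1 := (QuotientGroup.eq_one_iff h).mpr hhF
    have huq : ((u : N) : N ⧸ F) = ((t : N ⧸ F)) ^ (m - n) := by
      rw [hu, QuotientGroup.mk_mul, hhq, mul_one, QuotientGroup.mk_zpow]
    have hq : ((t : N ⧸ F)) ^ ((m - n) * i) = 1 := by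
      have h2 : ((u : N) : N ⧸ F) ^ i * ((a : N) : N ⧸ F) ^ j = 1 := by
        rw [← QuotientGroup.mk_zpow, ← QuotientGroup.mk_zpow, ← QuotientGroup.mk_mul, hp',
          QuotientGroup.mk_one]
      rw [haq, one_zpow, mul_one, huq, ← zpow_mul] at h2
      exact h2
    have hi : i = 0 := by
      by_contra hi
      exact hinf _ (mul_ne_zero (sub_ne_zero.mpr hmn) hi) hq
    subst hi
    have hj : j = 0 := by
      by_contra hj
      have : IsOfFinOrder a := isOfFinOrder_iff_zpow_eq_one.mpr ⟨j, hj, by simpa using hp'⟩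
      exact hTF a haNe this
    subst hj
    rfl
  exact hNoZ2 f.range ⟨(MonoidHom.ofInjective hinj).symm⟩
end

section
/- Let S₁ and S₂ be two spheres in ℝⁿ ∪ {∞} that are externally tangent at a point d. Then the composition τ_{S₂} ∘ τ_{S₁} of the inversions in S₁ and S₂ is a parabolic Möbius transformation: it fixes d and has no other fixed point in ℝⁿ ∪ {∞}. -/
open OnePoint Metric
open scoped Classical

/-- Inversion in the sphere of center `a` and radius `r`, as a self-map of the
one-point compactification `ℝ̂ⁿ = ℝⁿ ∪ {∞}`: it swaps `a` and `∞` and acts by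
`x ↦ a + (r²/‖x-a‖²) (x-a)` elsewhere. -/
noncomputable def sphereInversion {n : ℕ} (a : EuclideanSpace ℝ (Fin n)) (r : ℝ) :
    OnePoint (EuclideanSpace ℝ (Fin n)) → OnePoint (EuclideanSpace ℝ (Fin n)) :=
  fun z => Option.elim z (↑a) (fun x =>
    if x = a then (∞ : OnePoint (EuclideanSpace ℝ (Fin n)))
    else ↑(a + (r ^ 2 / ‖x - a‖ ^ 2) • (x - a)))

/-- A point lying on both of two externally tangent spheres is the point of tangency
`a₁ + (r₁/(r₁+r₂)) • (a₂ - a₁)`. -/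
lemma tangent_unique {n : ℕ} (x a₁ a₂ : EuclideanSpace ℝ (Fin n)) (r₁ r₂ : ℝ)
    (hR : 0 < r₁ + r₂)
    (h₁ : ‖x - a₁‖ = r₁) (h₂ : ‖x - a₂‖ = r₂) (he : ‖a₂ - a₁‖ = r₁ + r₂) :
    x = a₁ + (r₁ / (r₁ + r₂)) • (a₂ - a₁) := by
  have hinner : (inner ℝ (x - a₁) (a₂ - a₁) : ℝ) = r₁ * (r₁ + r₂) := by
    have h := norm_sub_sq_real (x - a₁) (a₂ - a₁)
    have hxx : x - a₁ - (a₂ - a₁) = x - a₂ := by abel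
    rw [hxx, h₂, h₁, he] at h
    nlinarith [h]
  have key : ‖(x - a₁) - (r₁ / (r₁ + r₂)) • (a₂ - a₁)‖ ^ 2 = 0 := by
    rw [norm_sub_sq_real, real_inner_smul_right, norm_smul, hinner, h₁, he,
      mul_pow, Real.norm_eq_abs, sq_abs]
    field_simp
    ring
  have key2 : (x - a₁) - (r₁ / (r₁ + r₂)) • (a₂ - a₁) = 0 := by
    rwa [pow_eq_zero_iff (two_ne_zero), norm_eq_zero] at key
  have : x - a₁ = (r₁ / (r₁ + r₂)) • (a₂ - a₁) := by
    rwa [sub_eq_zero] at key2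
  rw [sub_eq_iff_eq_add'] at this
  exact this

/-- If two spheres `S₁ = S(a₁,r₁)` and `S₂ = S(a₂,r₂)` in `ℝ̂ⁿ` are externally tangent
at the point `d` (so `‖a₁ - a₂‖ = r₁ + r₂` and `d` is the unique common point), then
the composition `τ_{S₂} ∘ τ_{S₁}` of the two inversions is parabolic: it fixes `d`
and has no other fixed point in `ℝ̂ⁿ`. -/
theorem stmt6 {n : ℕ} (a₁ a₂ d : EuclideanSpace ℝ (Fin n)) (r₁ r₂ : ℝ)
    (hr₁ : 0 < r₁) (hr₂ : 0 < r₂)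
    (htan : ‖a₁ - a₂‖ = r₁ + r₂)
    (hd₁ : d ∈ sphere a₁ r₁) (hd₂ : d ∈ sphere a₂ r₂)
    (hball : ball a₁ r₁ ∩ ball a₂ r₂ = ∅)
    (huniq : sphere a₁ r₁ ∩ sphere a₂ r₂ = {d}) :
    sphereInversion a₂ r₂ (sphereInversion a₁ r₁ (↑d)) = (↑d) ∧
    ∀ z : OnePoint (EuclideanSpace ℝ (Fin n)), z ≠ (↑d) →
      sphereInversion a₂ r₂ (sphereInversion a₁ r₁ z) ≠ z := by
  have hR : 0 < r₁ + r₂ := by positivity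
  have he : ‖a₂ - a₁‖ = r₁ + r₂ := by rw [norm_sub_rev]; exact htan
  have hd₁' : ‖d - a₁‖ = r₁ := mem_sphere_iff_norm.mp hd₁
  have hd₂' : ‖d - a₂‖ = r₂ := mem_sphere_iff_norm.mp hd₂
  have he0 : a₂ - a₁ ≠ 0 := by
    intro h; rw [h] at he; simp at he; linarith
  have ha₁₂ : a₁ ≠ a₂ := by
    intro h; rw [h] at he; simp at he; linarith
  have hda₁ : d ≠ a₁ := by
    intro h; rw [h, sub_self, norm_zero] at hd₁'; linarith
  have hda₂ : d ≠ a₂ := by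
    intro h; rw [h, sub_self, norm_zero] at hd₂'; linarith
  -- a point on a sphere is fixed by the inversion in that sphere
  have fixgen : ∀ (a : EuclideanSpace ℝ (Fin n)) (r : ℝ), 0 < r → ∀ x, ‖x - a‖ = r →
      sphereInversion a r ↑x = ↑x := by
    intro a r hr x hx
    have hxa : x ≠ a := by
      intro h; rw [h, sub_self, norm_zero] at hx; linarith
    show (if x = a then (∞ : OnePoint (EuclideanSpace ℝ (Fin n)))
      else ↑(a + (r ^ 2 / ‖x - a‖ ^ 2) • (x - a))) = ↑x
    rw [if_neg hxa, hx, div_self (by positivity), one_smul, add_sub_cancel]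
  constructor
  · rw [fixgen a₁ r₁ hr₁ d hd₁', fixgen a₂ r₂ hr₂ d hd₂']
  · intro z hz
    match z with
    | (∞ : OnePoint (EuclideanSpace ℝ (Fin n))) =>
      have h1 : sphereInversion a₁ r₁ ∞ = ↑a₁ := rfl
      rw [h1]
      show (if a₁ = a₂ then (∞ : OnePoint (EuclideanSpace ℝ (Fin n)))
        else ↑(a₂ + (r₂ ^ 2 / ‖a₁ - a₂‖ ^ 2) • (a₁ - a₂))) ≠ ∞
      rw [if_neg ha₁₂]
      exact OnePoint.coe_ne_infty _
    | ((x : EuclideanSpace ℝ (Fin n)) : OnePoint (EuclideanSpace ℝ (Fin n))) =>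
      have hxd : x ≠ d := fun h => hz (by rw [h])
      by_cases hxa₁ : x = a₁
      · have h1 : sphereInversion a₁ r₁ ↑x = ∞ := by
          show (if x = a₁ then (∞ : OnePoint (EuclideanSpace ℝ (Fin n)))
            else ↑(a₁ + (r₁ ^ 2 / ‖x - a₁‖ ^ 2) • (x - a₁))) = ∞
          rw [if_pos hxa₁]
        rw [h1]
        show (↑a₂ : OnePoint (EuclideanSpace ℝ (Fin n))) ≠ ↑x
        intro h
        have : a₂ = x := OnePoint.coe_injective h
        rw [this] at ha₁₂
        exact ha₁₂ hxa₁.symm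
      · -- the generic finite case
        set L : ℝ := r₁ ^ 2 / ‖x - a₁‖ ^ 2 with hLdef
        set y : EuclideanSpace ℝ (Fin n) := a₁ + L • (x - a₁) with hydef
        have h1 : sphereInversion a₁ r₁ ↑x = ↑y := by
          show (if x = a₁ then (∞ : OnePoint (EuclideanSpace ℝ (Fin n))) else ↑(a₁ + L • (x - a₁))) = ↑y
          rw [if_neg hxa₁]
        rw [h1]
        by_cases hya₂ : y = a₂
        · have h2 : sphereInversion a₂ r₂ ↑y = ∞ := by
            show (if y = a₂ then (∞ : OnePoint (EuclideanSpace ℝ (Fin n))) else _) = ∞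
            rw [if_pos hya₂]
          rw [h2]
          exact fun h => OnePoint.coe_ne_infty x h.symm
        · have h2 : sphereInversion a₂ r₂ ↑y
              = ↑(a₂ + (r₂ ^ 2 / ‖y - a₂‖ ^ 2) • (y - a₂)) := by
            show (if y = a₂ then (∞ : OnePoint (EuclideanSpace ℝ (Fin n)))
              else ↑(a₂ + (r₂ ^ 2 / ‖y - a₂‖ ^ 2) • (y - a₂))) = _
            rw [if_neg hya₂]
          rw [h2]
          intro hfix
          have hx : a₂ + (r₂ ^ 2 / ‖y - a₂‖ ^ 2) • (y - a₂) = x :=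
            OnePoint.coe_injective hfix
          -- translate to vector algebra
          set M : ℝ := r₂ ^ 2 / ‖y - a₂‖ ^ 2 with hMdef
          set p : EuclideanSpace ℝ (Fin n) := x - a₁ with hpdef
          set e : EuclideanSpace ℝ (Fin n) := a₂ - a₁ with hedef
          have hp0 : p ≠ 0 := sub_ne_zero.mpr hxa₁
          have hnp : ‖p‖ ^ 2 ≠ 0 := pow_ne_zero _ (norm_ne_zero_iff.mpr hp0)
          have hL : L * ‖p‖ ^ 2 = r₁ ^ 2 := div_mul_cancel₀ _ hnp
          have hya : y - a₂ = L • p - e := by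
            rw [hydef, hedef, hpdef]; abel
          have hq0 : L • p - e ≠ 0 := by rw [← hya]; exact sub_ne_zero.mpr hya₂
          have hnq : ‖L • p - e‖ ^ 2 ≠ 0 := pow_ne_zero _ (norm_ne_zero_iff.mpr hq0)
          have hM : M * ‖L • p - e‖ ^ 2 = r₂ ^ 2 := by
            rw [hMdef, hya]; exact div_mul_cancel₀ _ hnq
          have hEq : M • (L • p - e) = p - e := by
            rw [← hya]
            have : x - a₂ = p - e := by rw [hpdef, hedef]; abel
            rw [← this, ← hx]; abel
          have hmain : (1 - M * L) • p = (1 - M) • e := by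
            have h : p - e = (M * L) • p - M • e := by
              rw [← hEq, smul_sub, mul_smul]
            calc (1 - M * L) • p = p - (M * L) • p := by rw [sub_smul, one_smul]
              _ = (p - e) - ((M * L) • p - M • e) + e - M • e := by abel
              _ = e - M • e := by rw [h]; abel
              _ = (1 - M) • e := by rw [sub_smul, one_smul]
          by_cases hML : M * L = 1
          · -- tangency case: x lies on both spheres
            have : (1 - M) • e = 0 := by rw [← hmain, hML, sub_self, zero_smul]
            have hM1 : M = 1 := by
              rcases smul_eq_zero.mp this with h | h
              · linarith [h]
              · exact absurd h he0
            have hL1 : L = 1 := by rw [hM1, one_mul] at hML; exact hML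
            have hxs₁ : ‖x - a₁‖ = r₁ := by
              rw [hL1, one_mul] at hL
              exact (pow_left_inj₀ (norm_nonneg _) hr₁.le two_ne_zero).mp hL
            have hxs₂ : ‖x - a₂‖ = r₂ := by
              have hpe : (1 : ℝ) • p - e = x - a₂ := by
                rw [one_smul, hpdef, hedef]; abel
              rw [hL1, hM1, one_mul, hpe] at hM
              exact (pow_left_inj₀ (norm_nonneg _) hr₂.le two_ne_zero).mp hM
            have hx1 : x = a₁ + (r₁ / (r₁ + r₂)) • (a₂ - a₁) :=
              tangent_unique x a₁ a₂ r₁ r₂ hR hxs₁ hxs₂ he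
            have hd1 : d = a₁ + (r₁ / (r₁ + r₂)) • (a₂ - a₁) :=
              tangent_unique d a₁ a₂ r₁ r₂ hR hd₁' hd₂' he
            exact hxd (hx1.trans hd1.symm)
          · -- generic case: collinearity forces contradiction
            have hML0 : (1 : ℝ) - M * L ≠ 0 := sub_ne_zero.mpr (Ne.symm hML)
            set c : ℝ := (1 - M) / (1 - M * L) with hcdef
            have hpc : p = c • e := by
              have := congrArg (fun v => (1 - M * L)⁻¹ • v) hmain
              simp only [← mul_smul] at this
              rw [inv_mul_cancel₀ hML0, one_smul] at this
              rw [this, hcdef, div_eq_inv_mul]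
            have hc0 : c ≠ 0 := by
              intro h; rw [h, zero_smul] at hpc; exact hp0 hpc
            have hE : ‖e‖ = r₁ + r₂ := he
            have h1 : L * (c ^ 2 * (r₁ + r₂) ^ 2) = r₁ ^ 2 := by
              rw [← hE]
              have : ‖p‖ ^ 2 = c ^ 2 * ‖e‖ ^ 2 := by
                rw [hpc, norm_smul, mul_pow, Real.norm_eq_abs, sq_abs]
              rw [← this]; exact hL
            have hLpe : L • p - e = (L * c - 1) • e := by
              rw [hpc, ← mul_smul, sub_smul, one_smul]
            have hs1 : L * c - 1 ≠ 0 := by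
              intro h
              apply hq0
              rw [hLpe, h, zero_smul]
            have h2 : M * ((L * c - 1) ^ 2 * (r₁ + r₂) ^ 2) = r₂ ^ 2 := by
              rw [← hE]
              have hn : ‖L • p - e‖ ^ 2 = (L * c - 1) ^ 2 * ‖e‖ ^ 2 := by
                rw [hLpe, norm_smul, mul_pow, Real.norm_eq_abs, sq_abs]
              rw [← hn]; exact hM
            have h3 : c * (1 - M * L) = 1 - M := div_mul_cancel₀ _ hML0
            -- scalar contradiction
            set t : ℝ := c
            set s : ℝ := L * c with hsdef
            have hts : s * t * (r₁ + r₂) ^ 2 = r₁ ^ 2 := by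
              rw [hsdef]; linear_combination h1
            have hsub : t - 1 = M * (s - 1) := by
              rw [hsdef]; linear_combination h3
            have h2' : (t - 1) * (s - 1) * (r₁ + r₂) ^ 2 = r₂ ^ 2 := by
              linear_combination ((s - 1) * (r₁ + r₂) ^ 2) * hsub + h2
            have hsum2 : ((t + s) * (r₁ + r₂)) * (r₁ + r₂) = (2 * r₁) * (r₁ + r₂) := by
              linear_combination hts - h2'
            have hsum : (t + s) * (r₁ + r₂) = 2 * r₁ :=
              mul_right_cancel₀ (ne_of_gt hR) hsum2
            have hdiff : (t - s) ^ 2 * (r₁ + r₂) ^ 2 = 0 := by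
              linear_combination ((t + s) * (r₁ + r₂) + 2 * r₁) * hsum - 4 * hts
            have hts0 : t = s := by
              have h0 : (t - s) ^ 2 = 0 := by
                have := mul_eq_zero.mp hdiff
                rcases this with h | h
                · exact h
                · exact absurd h (by positivity)
              have := pow_eq_zero_iff (two_ne_zero) |>.mp h0
              linarith [sub_eq_zero.mp this]
            have hL1 : L = 1 := by
              have : L * c = 1 * c := by rw [one_mul, ← hsdef, ← hts0]
              exact mul_right_cancel₀ hc0 this
            have h3' : (c - 1) * (1 - M) = 0 := by
              rw [hL1] at h3; linear_combination h3
            rcases mul_eq_zero.mp h3' with h | h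
            · have hc1 : c = 1 := by linarith [sub_eq_zero.mp h]
              apply hs1
              rw [hsdef, hL1, hc1]; ring
            · have hM1 : M = 1 := by linarith
              rw [hM1, hL1] at hML
              exact hML (one_mul 1)
end

section
/- Let F be a normal subgroup of a group N with N/F ≅ ℤ generated by the image of t ∈ N. If h ∈ F and n ∈ ℤ satisfy that h⁻¹tⁿ commutes with a given g ∈ F, and N is torsion-free with no ℤ² subgroup and g has infinite order, then n = 0. -/
/-- Key step: let `N` be torsion-free with no `ℤ × ℤ` subgroup, `F ⊴ N` with `N/F`
infinite cyclic generated by the image of `t`, and let `g ∈ F` have infinite order.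
If `h ∈ F` and `n : ℤ` are such that `h⁻¹ tⁿ` commutes with `g`, then `n = 0`. -/
theorem stmt16 {N : Type*} [Group N]
    (hTF : ∀ g : N, g ≠ 1 → ¬IsOfFinOrder g)
    (hNoZ2 : ∀ K : Subgroup N, ¬ Nonempty (K ≃* Multiplicative (ℤ × ℤ)))
    (F : Subgroup N) [F.Normal] (t : N)
    (hgen : ∀ x : N ⧸ F, ∃ k : ℤ, x = ((t : N ⧸ F)) ^ k)
    (hinf : ∀ k : ℤ, k ≠ 0 → ((t : N ⧸ F)) ^ k ≠ 1)
    (g : N) (hgF : g ∈ F) (hgord : ¬ IsOfFinOrder g)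
    (h : N) (hhF : h ∈ F) (n : ℤ)
    (hcomm : Commute (h⁻¹ * t ^ n) g) :
    n = 0 := by
  by_contra hn
  set c : N := h⁻¹ * t ^ n with hc
  -- image of c in N ⧸ F is (t : N⧸F)^n
  have hcq : ((c : N ⧸ F)) = ((t : N ⧸ F)) ^ n := by
    have : ((h : N ⧸ F)) = 1 := (QuotientGroup.eq_one_iff h).mpr hhF
    simp [hc, this]
  have hgq : ((g : N ⧸ F)) = 1 := (QuotientGroup.eq_one_iff g).mpr hgF
  -- the homomorphism ℤ × ℤ → N, (a, b) ↦ c^a * g^b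
  let f : Multiplicative (ℤ × ℤ) →* N :=
    { toFun := fun p => c ^ (p.toAdd.1) * g ^ (p.toAdd.2)
      map_one' := by simp
      map_mul' := by
        intro p q
        have hcg : Commute (g ^ (p.toAdd.2)) (c ^ (q.toAdd.1)) :=
          (hcomm.symm).zpow_zpow _ _
        simp only [toAdd_mul, Prod.fst_add, Prod.snd_add, zpow_add, mul_assoc]
        rw [← mul_assoc (g ^ (p.toAdd.2)), hcg.eq, mul_assoc] }
  have finj : Function.Injective f := by
    rw [injective_iff_map_eq_one]
    intro p hp
    have hp' : c ^ (p.toAdd.1) * g ^ (p.toAdd.2) = 1 := hp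
    -- project to N ⧸ F
    have hq : ((t : N ⧸ F)) ^ (n * p.toAdd.1) = 1 := by
      have := congrArg (QuotientGroup.mk (s := F)) hp'
      simpa [QuotientGroup.mk_mul, QuotientGroup.mk_zpow, hcq, hgq,
        ← zpow_mul] using this
    have ha : p.toAdd.1 = 0 := by
      by_contra hA
      exact hinf (n * p.toAdd.1) (mul_ne_zero hn hA) hq
    have hb : g ^ (p.toAdd.2) = 1 := by
      simpa [ha] using hp'
    have hb0 : p.toAdd.2 = 0 := by
      by_contra hB
      exact hgord (isOfFinOrder_iff_zpow_eq_one.mpr ⟨_, hB, hb⟩)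
    have : p.toAdd = 0 := Prod.ext ha hb0
    exact Multiplicative.toAdd.injective this
  exact hNoZ2 f.range ⟨(MonoidHom.ofInjective finj).symm⟩
end
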